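/- The function U(x,y,z) = -1/(8π√((x²+y²)² + 16z²)) is smooth on ℝ³ \ {0} and satisfies the Heisenberg sub-Laplace equation X²U + Y²U = 0 on ℝ³ \ {0}. -/

import Mathlib

/-- The Heisenberg vector field X = ∂/∂x - (y/2)∂/∂z acting as a derivation. -/
noncomputable def Xop (f : ℝ × ℝ × ℝ → ℝ) (p : ℝ × ℝ × ℝ) : ℝ :=
  fderiv ℝ f p (1, 0, -(p.2.1 / 2))

/-- The Heisenberg vector field Y = ∂/∂y + (x/2)∂/∂z acting as a derivation. -/
noncomputable def Yop (f : ℝ × ℝ × ℝ → ℝ) (p : ℝ × ℝ × ℝ) : ℝ :=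
  fderiv ℝ f p (0, 1, p.1 / 2)

/-- The Kepler-Heisenberg potential U = -1/(8π√((x²+y²)² + 16z²)). -/
noncomputable def Upot (p : ℝ × ℝ × ℝ) : ℝ :=
  -(1 / (8 * Real.pi * Real.sqrt ((p.1^2 + p.2.1^2)^2 + 16 * p.2.2^2)))

open Real

/-- The squared Heisenberg gauge. -/
noncomputable def rho (p : ℝ × ℝ × ℝ) : ℝ := (p.1^2 + p.2.1^2)^2 + 16 * p.2.2^2

lemma rho_pos {p : ℝ × ℝ × ℝ} (hp : p ≠ 0) : 0 < rho p := by
  rcases lt_or_eq_of_le (by unfold rho; positivity : (0:ℝ) ≤ rho p) with h | h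
  · exact h
  exfalso; apply hp
  simp only [rho] at h
  have h2 : (p.1^2+p.2.1^2)^2 = 0 := by nlinarith [sq_nonneg (p.1^2+p.2.1^2), sq_nonneg p.2.2]
  have h3 : p.1^2 + p.2.1^2 = 0 := pow_eq_zero_iff two_ne_zero |>.mp h2
  have hx : p.1 = 0 := pow_eq_zero_iff two_ne_zero |>.mp (by nlinarith [sq_nonneg p.1, sq_nonneg p.2.1])
  have hy : p.2.1 = 0 := pow_eq_zero_iff two_ne_zero |>.mp (by nlinarith [sq_nonneg p.1, sq_nonneg p.2.1])
  have hz : p.2.2 = 0 := pow_eq_zero_iff two_ne_zero |>.mp (by nlinarith [h2, sq_nonneg p.2.2])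
  exact Prod.ext hx (Prod.ext hy hz)

/-- First X-derivative of the potential, in closed form. -/
noncomputable def g1 (p : ℝ × ℝ × ℝ) : ℝ :=
  (4*p.1*(p.1^2+p.2.1^2) - 16*p.2.1*p.2.2) * (16*Real.pi*(rho p*Real.sqrt (rho p)))⁻¹

/-- First Y-derivative of the potential, in closed form. -/
noncomputable def g2 (p : ℝ × ℝ × ℝ) : ℝ :=
  (4*p.2.1*(p.1^2+p.2.1^2) + 16*p.1*p.2.2) * (16*Real.pi*(rho p*Real.sqrt (rho p)))⁻¹

lemma XU_eq {p : ℝ × ℝ × ℝ} (hp : p ≠ 0) : Xop Upot p = g1 p ∧ Yop Upot p = g2 p := by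
  have hρ := rho_pos hp
  have hx : HasFDerivAt (fun q : ℝ × ℝ × ℝ => q.1) (ContinuousLinearMap.fst ℝ ℝ (ℝ × ℝ)) p := hasFDerivAt_fst
  have hz' : HasFDerivAt (fun q : ℝ × ℝ × ℝ => q.2) (ContinuousLinearMap.snd ℝ ℝ (ℝ × ℝ)) p := hasFDerivAt_snd
  have hy : HasFDerivAt (fun q : ℝ × ℝ × ℝ => q.2.1) _ p := hz'.fst
  have hz : HasFDerivAt (fun q : ℝ × ℝ × ℝ => q.2.2) _ p := hz'.snd
  have hr0 := ((hx.mul hx).add (hy.mul hy))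
  have hrho0 := ((hr0.mul hr0).add ((hz.mul hz).const_mul 16))
  have hrho : HasFDerivAt rho _ p :=
    hrho0.congr_of_eventuallyEq (Filter.Eventually.of_forall fun q => by simp [rho]; ring)
  have hst : HasDerivAt Real.sqrt (1/(2*Real.sqrt (rho p))) (rho p) := Real.hasDerivAt_sqrt (ne_of_gt hρ)
  have hden : (8*π*Real.sqrt (rho p)) ≠ 0 := by positivity
  have hh := (((hasDerivAt_const (rho p) (1:ℝ)).div (hst.const_mul (8*π)) hden)).neg
  have hU0 := hh.comp_hasFDerivAt p hrho
  have hU : HasFDerivAt Upot _ p :=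
    hU0.congr_of_eventuallyEq (Filter.Eventually.of_forall fun q => by simp [Upot, rho])
  constructor
  · rw [Xop, hU.fderiv]
    simp only [g1]
    simp
    set s := Real.sqrt (rho p) with hsdef
    have hs0 : 0 < s := Real.sqrt_pos.mpr hρ
    have hss : s * s = rho p := Real.mul_self_sqrt hρ.le
    rw [← hss]
    have hπ := Real.pi_pos
    field_simp
    ring
  · rw [Yop, hU.fderiv]
    simp only [g2]
    simp
    set s := Real.sqrt (rho p) with hsdef
    have hs0 : 0 < s := Real.sqrt_pos.mpr hρ
    have hss : s * s = rho p := Real.mul_self_sqrt hρ.le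
    rw [← hss]
    have hπ := Real.pi_pos
    field_simp
    ring

set_option maxHeartbeats 2000000 in
/-- U is smooth away from the origin and is harmonic for the Heisenberg
    sub-Laplacian: X²U + Y²U = 0 on ℝ³ \ {0}. -/
theorem potential_subharmonic :
    ContDiffOn ℝ (⊤ : ℕ∞) Upot {p : ℝ × ℝ × ℝ | p ≠ 0} ∧
    ∀ p : ℝ × ℝ × ℝ, p ≠ 0 → Xop (Xop Upot) p + Yop (Yop Upot) p = 0 := by
  constructor
  · intro p hp
    have hρ := rho_pos hp
    have h1 : ContDiff ℝ (⊤ : ℕ∞) rho := by unfold rho; fun_prop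
    have h2 : ContDiffAt ℝ (⊤ : ℕ∞) (fun q => Real.sqrt (rho q)) p :=
      (Real.contDiffAt_sqrt (ne_of_gt hρ)).comp p h1.contDiffAt
    have h3 : ContDiffAt ℝ (⊤ : ℕ∞) (fun q => 8*π*Real.sqrt (rho q)) p := contDiffAt_const.mul h2
    have hden : (8*π*Real.sqrt (rho p)) ≠ 0 := by positivity
    have h4 := (h3.inv hden).neg
    have h5 : ContDiffAt ℝ (⊤ : ℕ∞) Upot p :=
      h4.congr_of_eventuallyEq (Filter.Eventually.of_forall fun q => by simp [Upot, rho, one_div])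
    exact h5.contDiffWithinAt
  · intro p hp
    have hρ := rho_pos hp
    -- eventual equality of first derivatives with closed forms
    have hmem : {q : ℝ × ℝ × ℝ | q ≠ 0} ∈ nhds p := by
      have : IsOpen {q : ℝ × ℝ × ℝ | q ≠ 0} := isOpen_compl_singleton
      exact this.mem_nhds hp
    have hev1 : Xop Upot =ᶠ[nhds p] g1 :=
      Filter.eventually_of_mem hmem (fun q hq => (XU_eq hq).1)
    have hev2 : Yop Upot =ᶠ[nhds p] g2 :=
      Filter.eventually_of_mem hmem (fun q hq => (XU_eq hq).2)
    -- derivative machinery at p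
    have hx : HasFDerivAt (fun q : ℝ × ℝ × ℝ => q.1) (ContinuousLinearMap.fst ℝ ℝ (ℝ × ℝ)) p := hasFDerivAt_fst
    have hz' : HasFDerivAt (fun q : ℝ × ℝ × ℝ => q.2) (ContinuousLinearMap.snd ℝ ℝ (ℝ × ℝ)) p := hasFDerivAt_snd
    have hy : HasFDerivAt (fun q : ℝ × ℝ × ℝ => q.2.1) _ p := hz'.fst
    have hz : HasFDerivAt (fun q : ℝ × ℝ × ℝ => q.2.2) _ p := hz'.snd
    have hr0 := ((hx.mul hx).add (hy.mul hy))
    have hrho0 := ((hr0.mul hr0).add ((hz.mul hz).const_mul 16))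
    have hrho : HasFDerivAt rho _ p :=
      hrho0.congr_of_eventuallyEq (Filter.Eventually.of_forall fun q => by simp [rho]; ring)
    have hst : HasDerivAt Real.sqrt (1/(2*Real.sqrt (rho p))) (rho p) := Real.hasDerivAt_sqrt (ne_of_gt hρ)
    have hdne : (16*π*(rho p*Real.sqrt (rho p))) ≠ 0 := by positivity
    -- outer scalar function k t = (16π t √t)⁻¹
    have hk : HasDerivAt (fun t : ℝ => (16*π*(t*Real.sqrt t))⁻¹) _ (rho p) :=
      (((hasDerivAt_id (rho p)).mul hst).const_mul (16*π)).inv hdne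
    have hkrho := hk.comp_hasFDerivAt p hrho
    -- numerators
    have hA0 := (((hx.const_mul 4).mul ((hx.mul hx).add (hy.mul hy))).sub ((hy.const_mul 16).mul hz))
    have hB0 := (((hy.const_mul 4).mul ((hx.mul hx).add (hy.mul hy))).add ((hx.const_mul 16).mul hz))
    have hg1 : HasFDerivAt g1 _ p :=
      (hA0.mul hkrho).congr_of_eventuallyEq (Filter.Eventually.of_forall fun q => by simp only [g1, Function.comp_apply, Pi.mul_apply, Pi.add_apply, Pi.sub_apply, Pi.pow_apply]; ring)
    have hg2 : HasFDerivAt g2 _ p :=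
      (hB0.mul hkrho).congr_of_eventuallyEq (Filter.Eventually.of_forall fun q => by simp only [g2, Function.comp_apply, Pi.mul_apply, Pi.add_apply, Pi.sub_apply, Pi.pow_apply]; ring)
    have e1 : Xop (Xop Upot) p = Xop g1 p := by rw [Xop, Xop, hev1.fderiv_eq]
    have e2 : Yop (Yop Upot) p = Yop g2 p := by rw [Yop, Yop, hev2.fderiv_eq]
    rw [e1, e2, Xop, Yop, hg1.fderiv, hg2.fderiv]
    simp
    set s := Real.sqrt (rho p) with hsdef
    have hs0 : 0 < s := Real.sqrt_pos.mpr hρ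
    have hss : s * s = rho p := Real.mul_self_sqrt hρ.le
    rw [← hss]
    have hss2 : s^2 = (p.1^2+p.2.1^2)^2+16*p.2.2^2 := by
      rw [hsdef]; simpa [rho] using Real.sq_sqrt hρ.le
    have hπ := Real.pi_pos
    field_simp
    linear_combination (96 * (p.1^2+p.2.1^2)) * hss2
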